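/- Let α be irrational with denominators (q_n) and suppose q_{n+1}/q_n > 4/η³ for some 0 < η < 1/50. Set δ = η²/q_n and let I = [−η³/q_n, −2/q_{n+1}] ⊂ 𝕋. Then for every x ∈ I, the set of integers i ∈ {−q_n, …, 2q_n} with iα ∈ (x, x + δ) is exactly {−q_n, 0, q_n, 2q_n}. -/

import Mathlib

noncomputable def cdist (x : ℝ) : ℝ := ‖(x : AddCircle (1:ℝ))‖

/-- Iterates of the Gauss map applied to the fractional part of `α`. -/
noncomputable def gaussIter (α : ℝ) : ℕ → ℝ
  | 0 => Int.fract α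
  | n+1 => Int.fract (gaussIter α n)⁻¹

/-- Partial quotients of the continued fraction expansion of `α` (`cfA α n` is `a_n`). -/
noncomputable def cfA (α : ℝ) : ℕ → ℕ
  | 0 => 0
  | n+1 => (⌊(gaussIter α n)⁻¹⌋).toNat

/-- Denominators of the continued fraction expansion of `α`. -/
noncomputable def cfQ (α : ℝ) : ℕ → ℕ
  | 0 => 1
  | 1 => cfA α 1
  | n+2 => cfA α (n+2) * cfQ α (n+1) + cfQ α n


/-- The open arc from `a` to `b` on the circle. -/
def arcO (a b : AddCircle (1:ℝ)) : Set (AddCircle (1:ℝ)) :=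
  {z | ‖z - a‖ + ‖b - z‖ = ‖b - a‖ ∧ z ≠ a ∧ z ≠ b}

/-! Let `e_n = q_n α - p_n`. These errors alternate in sign and satisfy
`q_{n+1} |e_n| + q_n |e_{n+1}| = 1`, so `|e_n| < 1 / q_{n+1}`, and the best approximation property
gives `‖r α‖ ≥ |e_{n-1}| > 1 / (2 q_n)` for `0 < r < q_n`.
Write `i = m q_n + r` with `0 ≤ r < q_n` and `|m| ≤ 2`, so that `i α ≡ r α + m e_n`.
If `r = 0` this point is within `2 |e_n| < η³ / (2 q_n)` of `0`, hence in `(ξ, ξ + δ)`, because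
`ξ ≤ -2 / q_{n+1}` and `ξ + δ ≥ (η² - η³) / q_n`. If `r ≠ 0` it is at distance at least
`1 / (2 q_n) - 2 |e_n|` from `0`, while every point of the arc is within `(η² + η³) / q_n`
of `0`. -/

/-- Normalised by `p_0 = ⌊α⌋`, so that `q_n α - p_n = (-1)ⁿ g_0 g_1 ⋯ g_n` for the Gauss iterates
`g_k`, for every irrational `α`. -/
noncomputable def cfP (α : ℝ) : ℕ → ℤ
  | 0 => ⌊α⌋
  | 1 => cfA α 1 * ⌊α⌋ + 1
  | n+2 => cfA α (n+2) * cfP α (n+1) + cfP α n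

noncomputable def cfErr (α : ℝ) (n : ℕ) : ℝ := cfQ α n * α - cfP α n

lemma ne_zero_and_mul_nonpos_of_eq_mul_add_mul {a b q u v : ℤ} (ha : 0 < a) (hq : 0 < q)
    (hqb : q < b) (h : q = u * a + v * b) : u ≠ 0 ∧ u * v ≤ 0 := by
  constructor
  · rintro rfl
    rcases le_or_gt v 0 with hv | hv <;> nlinarith
  · by_contra! huv
    rcases pos_and_pos_or_neg_and_neg_of_mul_pos huv with ⟨hu, hv⟩ | ⟨hu, hv⟩ <;> nlinarith

section ContinuedFraction

variable {α : ℝ}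

lemma gaussIter_nonneg (α : ℝ) : ∀ n, 0 ≤ gaussIter α n
  | 0 => Int.fract_nonneg _
  | _ + 1 => Int.fract_nonneg _

lemma gaussIter_lt_one (α : ℝ) : ∀ n, gaussIter α n < 1
  | 0 => Int.fract_lt_one _
  | _ + 1 => Int.fract_lt_one _

lemma inv_gaussIter (α : ℝ) (n : ℕ) :
    (gaussIter α n)⁻¹ = cfA α (n + 1) + gaussIter α (n + 1) := by
  have hfloor : 0 ≤ ⌊(gaussIter α n)⁻¹⌋ := Int.floor_nonneg.2 (inv_nonneg.2 (gaussIter_nonneg α n))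
  have hcast : ((⌊(gaussIter α n)⁻¹⌋.toNat : ℕ) : ℝ) = ⌊(gaussIter α n)⁻¹⌋ := by
    exact_mod_cast Int.toNat_of_nonneg hfloor
  rw [cfA, gaussIter, hcast, Int.floor_add_fract]

lemma irrational_gaussIter (hα : Irrational α) : ∀ n, Irrational (gaussIter α n)
  | 0 => by simpa only [gaussIter, Int.self_sub_floor] using hα.sub_intCast ⌊α⌋
  | n + 1 => by
    simpa only [gaussIter, Int.self_sub_floor] using
      (irrational_gaussIter hα n).inv.sub_intCast ⌊(gaussIter α n)⁻¹⌋

lemma gaussIter_pos (hα : Irrational α) (n : ℕ) : 0 < gaussIter α n :=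
  (gaussIter_nonneg α n).lt_of_ne' (irrational_gaussIter hα n).ne_zero

lemma gaussIter_mul_cfA_add (hα : Irrational α) (n : ℕ) :
    gaussIter α n * (cfA α (n + 1) + gaussIter α (n + 1)) = 1 := by
  rw [← inv_gaussIter, mul_inv_cancel₀ (gaussIter_pos hα n).ne']

lemma one_le_cfA (hα : Irrational α) (n : ℕ) : 1 ≤ cfA α (n + 1) := by
  have h : (0 : ℝ) < cfA α (n + 1) := by
    have := (one_lt_inv₀ (gaussIter_pos hα n)).2 (gaussIter_lt_one α n)
    linarith [inv_gaussIter α n, gaussIter_lt_one α (n + 1)]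
  exact_mod_cast h

lemma cfQ_le_cfQ_succ (hα : Irrational α) : ∀ n, cfQ α n ≤ cfQ α (n + 1)
  | 0 => one_le_cfA hα 0
  | n + 1 => by
    show cfQ α (n + 1) ≤ cfA α (n + 2) * cfQ α (n + 1) + cfQ α n
    nlinarith [one_le_cfA hα (n + 1)]

lemma cfQ_pos (hα : Irrational α) : ∀ n, 0 < cfQ α n
  | 0 => Nat.one_pos
  | n + 1 => (cfQ_pos hα n).trans_le (cfQ_le_cfQ_succ hα n)

lemma cfP_mul_cfQ_sub (α : ℝ) (n : ℕ) :
    cfP α (n + 1) * cfQ α n - cfP α n * cfQ α (n + 1) = (-1) ^ n := by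
  induction n with
  | zero => simp only [cfP, cfQ]; push_cast; ring
  | succ n ih =>
    simp only [cfP, cfQ, Nat.cast_add, Nat.cast_mul] at ih ⊢
    linear_combination -ih

lemma cfErr_add_two (α : ℝ) (n : ℕ) :
    cfErr α (n + 2) = cfA α (n + 2) * cfErr α (n + 1) + cfErr α n := by
  simp only [cfErr, cfQ, cfP]
  push_cast
  ring

lemma cfErr_zero (α : ℝ) : cfErr α 0 = gaussIter α 0 := by
  rw [cfErr, gaussIter, ← Int.self_sub_floor, cfQ, cfP, Nat.cast_one, one_mul]

lemma cfErr_succ (hα : Irrational α) (n : ℕ) :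
    cfErr α (n + 1) = -gaussIter α (n + 1) * cfErr α n := by
  induction n with
  | zero =>
    have h0 : gaussIter α 0 = α - ⌊α⌋ := (Int.self_sub_floor α).symm
    have h := gaussIter_mul_cfA_add hα 0
    rw [h0] at h
    rw [cfErr_zero, h0]
    simp only [cfErr, cfQ, cfP]
    push_cast
    linear_combination h
  | succ n ih =>
    rw [cfErr_add_two, ih]
    linear_combination (-cfErr α n) * gaussIter_mul_cfA_add hα (n + 1)

lemma abs_cfErr_succ (hα : Irrational α) (n : ℕ) :
    |cfErr α (n + 1)| = gaussIter α (n + 1) * |cfErr α n| := by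
  rw [cfErr_succ hα, abs_mul, abs_neg, abs_of_pos (gaussIter_pos hα _)]

lemma abs_cfErr_pos (hα : Irrational α) : ∀ n, 0 < |cfErr α n|
  | 0 => by rw [cfErr_zero]; exact abs_pos.2 (gaussIter_pos hα 0).ne'
  | n + 1 => by
    rw [abs_cfErr_succ hα]
    exact mul_pos (gaussIter_pos hα _) (abs_cfErr_pos hα n)

lemma abs_cfErr_succ_lt (hα : Irrational α) (n : ℕ) : |cfErr α (n + 1)| < |cfErr α n| := by
  rw [abs_cfErr_succ hα]
  exact mul_lt_of_lt_one_left (abs_cfErr_pos hα n) (gaussIter_lt_one α _)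

lemma cfErr_eq_neg_one_pow_mul_abs (hα : Irrational α) :
    ∀ n, cfErr α n = (-1) ^ n * |cfErr α n|
  | 0 => by rw [cfErr_zero, pow_zero, one_mul, abs_of_nonneg (gaussIter_nonneg α 0)]
  | n + 1 => by
    have ih := cfErr_eq_neg_one_pow_mul_abs hα n
    rw [abs_cfErr_succ hα, cfErr_succ hα]
    linear_combination (-gaussIter α (n + 1)) * ih

lemma cfErr_mul_cfErr_succ_neg (hα : Irrational α) (n : ℕ) :
    cfErr α n * cfErr α (n + 1) < 0 := by
  have he : cfErr α n ≠ 0 := abs_pos.1 (abs_cfErr_pos hα n)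
  rw [cfErr_succ hα]
  nlinarith [mul_pos (gaussIter_pos hα (n + 1)) (mul_self_pos.2 he)]

lemma cfQ_succ_mul_cfErr_sub (α : ℝ) (n : ℕ) :
    cfQ α (n + 1) * cfErr α n - cfQ α n * cfErr α (n + 1) = (-1) ^ n := by
  have h : ((cfP α (n + 1) * cfQ α n - cfP α n * cfQ α (n + 1) : ℤ) : ℝ) = (-1) ^ n := by
    rw [cfP_mul_cfQ_sub]; push_cast; ring
  push_cast at h
  simp only [cfErr]
  linear_combination h

lemma cfQ_succ_mul_abs_cfErr_add (hα : Irrational α) (n : ℕ) :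
    cfQ α (n + 1) * |cfErr α n| + cfQ α n * |cfErr α (n + 1)| = 1 := by
  have hs : ((-1 : ℝ) ^ n) * (-1) ^ n = 1 := by rw [← mul_pow]; norm_num
  have h := cfQ_succ_mul_cfErr_sub α n
  have he := cfErr_eq_neg_one_pow_mul_abs hα n
  have he' := cfErr_eq_neg_one_pow_mul_abs hα (n + 1)
  rw [pow_succ] at he'
  -- both terms of `q_{n+1} e_n - q_n e_{n+1} = (-1)ⁿ` have the sign `(-1)ⁿ`
  linear_combination (-1) ^ n * h - (-1) ^ n * cfQ α (n + 1) * he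
    + (-1) ^ n * cfQ α n * he'
    - (cfQ α (n + 1) * |cfErr α n| + cfQ α n * |cfErr α (n + 1)| - 1) * hs

lemma cfQ_succ_mul_abs_cfErr_lt_one (hα : Irrational α) (n : ℕ) :
    cfQ α (n + 1) * |cfErr α n| < 1 := by
  have hq : (0 : ℝ) < cfQ α n := by exact_mod_cast cfQ_pos hα n
  nlinarith [cfQ_succ_mul_abs_cfErr_add hα n, abs_cfErr_pos hα (n + 1)]

lemma one_lt_cfQ_add_mul_abs_cfErr (hα : Irrational α) (n : ℕ) :
    1 < (cfQ α n + cfQ α (n + 1)) * |cfErr α n| := by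
  have hq : (0 : ℝ) < cfQ α n := by exact_mod_cast cfQ_pos hα n
  nlinarith [cfQ_succ_mul_abs_cfErr_add hα n, abs_cfErr_succ_lt hα n]

lemma abs_cfErr_le_abs_mul_sub (hα : Irrational α) (n : ℕ) {p q : ℤ} (hq0 : 0 < q)
    (hq : q < cfQ α (n + 1)) : |cfErr α n| ≤ |q * α - p| := by
  have hs : ((-1 : ℤ) ^ n) * (-1) ^ n = 1 := by rw [← mul_pow]; norm_num
  have det := cfP_mul_cfQ_sub α n
  -- coordinates of `(q, p)` in the unimodular basis `(q_n, p_n), (q_{n+1}, p_{n+1})`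
  obtain ⟨u, v, hqu, hpu⟩ : ∃ u v : ℤ, q = u * cfQ α n + v * cfQ α (n + 1) ∧
      p = u * cfP α n + v * cfP α (n + 1) :=
    ⟨(-1) ^ n * (q * cfP α (n + 1) - p * cfQ α (n + 1)),
      (-1) ^ n * (p * cfQ α n - q * cfP α n),
      by linear_combination (-(-1) ^ n * q) * det - q * hs,
      by linear_combination (-(-1) ^ n * p) * det - p * hs⟩
  have herr : (q : ℝ) * α - p = u * cfErr α n + v * cfErr α (n + 1) := by
    rw [hqu, hpu]
    simp only [cfErr]
    push_cast
    ring
  obtain ⟨hu, huv⟩ := ne_zero_and_mul_nonpos_of_eq_mul_add_mul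
    (by exact_mod_cast cfQ_pos hα n) hq0 hq hqu
  have hsame : 0 ≤ (u * cfErr α n) * (v * cfErr α (n + 1)) := by
    have huv' : (u : ℝ) * v ≤ 0 := by exact_mod_cast huv
    nlinarith [cfErr_mul_cfErr_succ_neg hα n]
  rw [herr]
  calc |cfErr α n| ≤ |(u : ℝ)| * |cfErr α n| :=
        le_mul_of_one_le_left (abs_nonneg _) (by exact_mod_cast Int.one_le_abs hu)
    _ = |u * cfErr α n| := (abs_mul _ _).symm
    _ ≤ |u * cfErr α n + v * cfErr α (n + 1)| := sq_le_sq.1 (by nlinarith)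

lemma abs_cfErr_le_norm (hα : Irrational α) (n : ℕ) {q : ℤ} (hq0 : 0 < q)
    (hq : q < cfQ α (n + 1)) : |cfErr α n| ≤ ‖((q * α : ℝ) : UnitAddCircle)‖ := by
  rw [UnitAddCircle.norm_eq]
  exact abs_cfErr_le_abs_mul_sub hα n hq0 hq

lemma one_lt_two_mul_cfQ_mul_norm (hα : Irrational α) {n : ℕ} {r : ℤ} (hr0 : 0 < r)
    (hr : r < cfQ α n) : 1 < 2 * cfQ α n * ‖((r * α : ℝ) : UnitAddCircle)‖ := by
  obtain _ | k := n
  · simp only [cfQ] at hr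
    omega
  have hmono : (cfQ α k : ℝ) ≤ cfQ α (k + 1) := by exact_mod_cast cfQ_le_cfQ_succ hα k
  nlinarith [one_lt_cfQ_add_mul_abs_cfErr hα k, abs_cfErr_le_norm hα k hr0 hr,
    abs_cfErr_pos hα k]

end ContinuedFraction

lemma UnitAddCircle.coe_add_intCast (x : ℝ) (k : ℤ) : ((x + k : ℝ) : UnitAddCircle) = x := by
  rw [AddCircle.coe_add, (AddCircle.coe_eq_zero_iff (x := (k : ℝ)) 1).2 ⟨k, by simp⟩, add_zero]

lemma UnitAddCircle.norm_coe_of_nonneg_of_le {t : ℝ} (h0 : 0 ≤ t) (h1 : t ≤ 1 / 2) :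
    ‖(t : UnitAddCircle)‖ = t := by
  rw [(AddCircle.norm_coe_eq_abs_iff 1 one_ne_zero).2 (by rw [abs_of_nonneg h0]; simpa using h1),
    abs_of_nonneg h0]

lemma coe_mem_arcO {x δ y : ℝ} (hδ : δ ≤ 1 / 2) (hxy : x < y) (hy : y < x + δ) :
    (y : UnitAddCircle) ∈ arcO x ↑(x + δ) := by
  have hyx : ‖(y : UnitAddCircle) - x‖ = y - x := by
    rw [← AddCircle.coe_sub, UnitAddCircle.norm_coe_of_nonneg_of_le] <;> linarith
  have hxy' : ‖((x + δ : ℝ) : UnitAddCircle) - y‖ = x + δ - y := by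
    rw [← AddCircle.coe_sub, UnitAddCircle.norm_coe_of_nonneg_of_le] <;> linarith
  have hδ' : ‖((x + δ : ℝ) : UnitAddCircle) - x‖ = δ := by
    rw [← AddCircle.coe_sub, add_sub_cancel_left, UnitAddCircle.norm_coe_of_nonneg_of_le] <;>
      linarith
  refine ⟨by rw [hyx, hxy', hδ']; ring, fun h => ?_, fun h => ?_⟩
  · rw [h, sub_self, norm_zero] at hyx
    linarith
  · rw [h, sub_self, norm_zero] at hxy'
    linarith

lemma norm_le_of_mem_arcO {a b z : UnitAddCircle} (hz : z ∈ arcO a b) :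
    ‖z‖ ≤ ‖a‖ + ‖b - a‖ := by
  obtain ⟨hsum, -, -⟩ := hz
  calc ‖z‖ = ‖a + (z - a)‖ := by rw [add_sub_cancel]
    _ ≤ ‖a‖ + ‖z - a‖ := norm_add_le _ _
    _ ≤ ‖a‖ + ‖b - a‖ := by linarith [norm_nonneg (b - z)]

lemma coe_intCast_mul_cfQ_add_mul (α : ℝ) (n : ℕ) (m r : ℤ) :
    ((((m * cfQ α n + r : ℤ) : ℝ) * α : ℝ) : UnitAddCircle) =
      ((r * α + m * cfErr α n : ℝ) : UnitAddCircle) := by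
  rw [← UnitAddCircle.coe_add_intCast (r * α + m * cfErr α n) (m * cfP α n)]
  congr 1
  simp only [cfErr]
  push_cast
  ring

lemma abs_intCast_mul_le_two_mul {m : ℤ} (hm : |m| ≤ 2) (x : ℝ) : |(m : ℝ) * x| ≤ 2 * |x| := by
  rw [abs_mul]
  gcongr
  exact_mod_cast hm

section Arc

variable {α η ξ : ℝ} {n : ℕ}

lemma coe_mul_cfErr_mem_arcO (hα : Irrational α) (hη0 : 0 < η) (hη : η ≤ 1 / 2)
    (hθ : 4 * cfQ α n * |cfErr α n| < η ^ 3) (hξl : -η ^ 3 / cfQ α n ≤ ξ)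
    (hξu : ξ < -2 * |cfErr α n|) {m : ℤ} (hm : |m| ≤ 2) :
    ((m * cfErr α n : ℝ) : UnitAddCircle) ∈ arcO ξ ↑(ξ + η ^ 2 / cfQ α n) := by
  have hQ : (1 : ℝ) ≤ cfQ α n := by exact_mod_cast cfQ_pos hα n
  have hm' := abs_intCast_mul_le_two_mul hm (cfErr α n)
  rw [div_le_iff₀ (by positivity)] at hξl
  apply coe_mem_arcO
  · rw [div_le_iff₀ (by positivity)]
    nlinarith
  · linarith [neg_abs_le ((m : ℝ) * cfErr α n)]
  · have h : 2 * |cfErr α n| * cfQ α n < (ξ + η ^ 2 / cfQ α n) * cfQ α n := by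
      rw [add_mul, div_mul_cancel₀ _ (by positivity)]
      nlinarith [mul_pos (pow_pos hη0 2) (by linarith : (0 : ℝ) < 1 - 3 / 2 * η)]
    linarith [le_abs_self ((m : ℝ) * cfErr α n), lt_of_mul_lt_mul_right h (by positivity)]

lemma coe_mul_add_mul_cfErr_notMem_arcO (hα : Irrational α) (hη0 : 0 < η) (hη : η ≤ 1 / 2)
    (hθ : 4 * cfQ α n * |cfErr α n| < η ^ 3) (hξl : -η ^ 3 / cfQ α n ≤ ξ)
    (hξu : ξ < -2 * |cfErr α n|) {m r : ℤ} (hm : |m| ≤ 2) (hr0 : 0 < r) (hr : r < cfQ α n) :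
    ((r * α + m * cfErr α n : ℝ) : UnitAddCircle) ∉ arcO ξ ↑(ξ + η ^ 2 / cfQ α n) := by
  intro harc
  have hQ : (0 : ℝ) < cfQ α n := by exact_mod_cast cfQ_pos hα n
  have hδ : (0 : ℝ) < η ^ 2 / cfQ α n := by positivity
  have hupper : ‖((r * α + m * cfErr α n : ℝ) : UnitAddCircle)‖ ≤ -ξ + η ^ 2 / cfQ α n := by
    refine (norm_le_of_mem_arcO harc).trans (add_le_add ?_ ?_)
    · refine QuotientAddGroup.norm_mk_le_norm.trans_eq (abs_of_neg ?_)
      linarith [abs_nonneg (cfErr α n)]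
    · rw [← AddCircle.coe_sub, add_sub_cancel_left]
      exact QuotientAddGroup.norm_mk_le_norm.trans_eq (abs_of_pos hδ)
  have hlower : ‖((r * α : ℝ) : UnitAddCircle)‖ ≤
      ‖((r * α + m * cfErr α n : ℝ) : UnitAddCircle)‖ + 2 * |cfErr α n| := by
    have hme : ‖((m * cfErr α n : ℝ) : UnitAddCircle)‖ ≤ 2 * |cfErr α n| :=
      QuotientAddGroup.norm_mk_le_norm.trans (abs_intCast_mul_le_two_mul hm _)
    have htri := norm_sub_le ((r * α + m * cfErr α n : ℝ) : UnitAddCircle) (m * cfErr α n : ℝ)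
    rw [← AddCircle.coe_sub, add_sub_cancel_right] at htri
    linarith
  rw [div_le_iff₀ hQ] at hξl
  have hξQ : -ξ * cfQ α n + η ^ 2 ≤ η ^ 3 + η ^ 2 := by nlinarith
  nlinarith [one_lt_two_mul_cfQ_mul_norm hα hr0 hr, mul_le_mul_of_nonneg_left hupper hQ.le,
    div_mul_cancel₀ (η ^ 2) hQ.ne', pow_pos hη0 2]

lemma coe_intCast_mul_mem_arcO_iff (hα : Irrational α) (hη0 : 0 < η) (hη : η ≤ 1 / 2)
    (hθ : 4 * cfQ α n * |cfErr α n| < η ^ 3) (hξl : -η ^ 3 / cfQ α n ≤ ξ)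
    (hξu : ξ < -2 * |cfErr α n|) {i : ℤ} (hi : |i| ≤ 2 * cfQ α n) :
    ((i * α : ℝ) : UnitAddCircle) ∈ arcO ξ ↑(ξ + η ^ 2 / cfQ α n) ↔ (cfQ α n : ℤ) ∣ i := by
  have hQ : (0 : ℤ) < cfQ α n := by exact_mod_cast cfQ_pos hα n
  obtain ⟨m, r, hr0, hrQ, rfl⟩ : ∃ m r : ℤ, 0 ≤ r ∧ r < cfQ α n ∧ i = m * cfQ α n + r :=
    ⟨i / cfQ α n, i % cfQ α n, Int.emod_nonneg _ hQ.ne', Int.emod_lt_of_pos _ hQ,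
      by linarith [Int.mul_ediv_add_emod i (cfQ α n)]⟩
  have hm : |m| ≤ 2 := by
    rw [abs_le] at hi ⊢
    constructor <;> nlinarith
  rw [coe_intCast_mul_cfQ_add_mul, dvd_add_right (dvd_mul_left _ _)]
  by_cases hr : r = 0
  · subst hr
    simpa using coe_mul_cfErr_mem_arcO hα hη0 hη hθ hξl hξu hm
  · exact iff_of_false
      (coe_mul_add_mul_cfErr_notMem_arcO hα hη0 hη hθ hξl hξu hm (hr0.lt_of_ne' hr) hrQ)
      (fun h => hr (Int.eq_zero_of_dvd_of_nonneg_of_lt hr0 hrQ h))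

end Arc

theorem stmt13_general (α : ℝ) (hα : Irrational α)
    (η : ℝ) (hη : η ∈ Set.Ioo (0:ℝ) (1/50)) (n : ℕ)
    (hratio : (4:ℝ) / η^3 < (cfQ α (n+1) : ℝ) / (cfQ α n : ℝ))
    (ξ : ℝ) (hξ : ξ ∈ Set.Icc (-(η^3) / (cfQ α n : ℝ)) (-(2:ℝ) / (cfQ α (n+1) : ℝ))) :
    {i : ℤ | i ∈ Set.Icc (-(cfQ α n : ℤ)) (2 * (cfQ α n : ℤ)) ∧
        (((i : ℝ) * α : ℝ) : AddCircle (1:ℝ)) ∈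
          arcO ((ξ : ℝ) : AddCircle (1:ℝ)) ((ξ + η^2 / (cfQ α n : ℝ) : ℝ) : AddCircle (1:ℝ))} =
      {-(cfQ α n : ℤ), 0, (cfQ α n : ℤ), 2 * (cfQ α n : ℤ)} := by
  obtain ⟨hη0, hη⟩ := hη
  obtain ⟨hξl, hξu⟩ := hξ
  have hQZ : (0 : ℤ) < cfQ α n := by exact_mod_cast cfQ_pos hα n
  have hQ : (0 : ℝ) < cfQ α n := by exact_mod_cast hQZ
  have hQ' : (0 : ℝ) < cfQ α (n + 1) := by exact_mod_cast cfQ_pos hα (n + 1)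
  have hθ' := cfQ_succ_mul_abs_cfErr_lt_one hα n
  have hθ : 4 * cfQ α n * |cfErr α n| < η ^ 3 := by
    rw [div_lt_div_iff₀ (by positivity) hQ] at hratio
    nlinarith [mul_le_mul_of_nonneg_right hratio.le (abs_nonneg (cfErr α n)), pow_pos hη0 3]
  have hξu' : ξ < -2 * |cfErr α n| := by
    rw [le_div_iff₀ hQ'] at hξu
    nlinarith
  have hmem := fun i (hi : |i| ≤ 2 * (cfQ α n : ℤ)) =>
    coe_intCast_mul_mem_arcO_iff hα hη0 (by linarith) hθ hξl hξu' hi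
  ext i
  simp only [Set.mem_ofPred_eq, Set.mem_Icc, Set.mem_insert_iff, Set.mem_singleton_iff]
  constructor
  · rintro ⟨⟨hi1, hi2⟩, harc⟩
    obtain ⟨j, rfl⟩ := (hmem _ (abs_le.2 ⟨by linarith, hi2⟩)).1 harc
    obtain ⟨hj1, hj2⟩ : -1 ≤ j ∧ j ≤ 2 := ⟨by nlinarith, by nlinarith⟩
    interval_cases j <;> omega
  · rintro (rfl | rfl | rfl | rfl) <;>
      exact ⟨⟨by omega, by omega⟩, (hmem _ (abs_le.2 ⟨by omega, by omega⟩)).2 (by simp)⟩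

/-- If `q_{n+1}/q_n > 4/η³` with `0 < η < 1/50`, `δ = η²/q_n` and
`x ∈ I = [−η³/q_n, −2/q_{n+1}] ⊂ 𝕋`, then the set of `i ∈ {−q_n, …, 2q_n}` with
`iα ∈ (x, x+δ)` is exactly `{−q_n, 0, q_n, 2q_n}`. -/
theorem stmt13 (α : ℝ) (hα : Irrational α) (hα1 : α ∈ Set.Ioo (0:ℝ) 1)
    (η : ℝ) (hη : η ∈ Set.Ioo (0:ℝ) (1/50)) (n : ℕ)
    (hratio : (4:ℝ) / η^3 < (cfQ α (n+1) : ℝ) / (cfQ α n : ℝ))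
    (ξ : ℝ) (hξ : ξ ∈ Set.Icc (-(η^3) / (cfQ α n : ℝ)) (-(2:ℝ) / (cfQ α (n+1) : ℝ))) :
    {i : ℤ | i ∈ Set.Icc (-(cfQ α n : ℤ)) (2 * (cfQ α n : ℤ)) ∧
        (((i : ℝ) * α : ℝ) : AddCircle (1:ℝ)) ∈
          arcO ((ξ : ℝ) : AddCircle (1:ℝ)) ((ξ + η^2 / (cfQ α n : ℝ) : ℝ) : AddCircle (1:ℝ))} =
      {-(cfQ α n : ℤ), 0, (cfQ α n : ℤ), 2 * (cfQ α n : ℤ)} :=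
  stmt13_general α hα η hη n hratio ξ hξ
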